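/- arXiv:1407.2397 — 5 statements merged into one kernel-verified Lean document; each statement's English description precedes it below -/
import Mathlib

section
/- Let q be an odd prime power and let A = {(a₁,…,a_d, a₁²+⋯+a_d²) : a₁,…,a_d ∈ F_q} ⊆ F_q^{d+1}. Then for every nonzero x ∈ F_q^{d+1}, the number of pairs (a,a') ∈ A × A with a - a' = x is at most q^{d-1}. -/
/-!
If `a - a' = x` with `a = (u, |u|²)` and `a' = (v, |v|²)` on the paraboloid, then
`v = u - x'` where `x' = (x₁, …, x_d)`, and comparing last coordinates gives the affine
equation `2 x' ⬝ u = x_{d+1} + x' ⬝ x'` for `u`. As `2 ≠ 0` and `x ≠ 0`, this equation is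
nontrivial, so it has at most `q^{d-1}` solutions; and `u` determines the pair `(a, a')`.
-/

open Finset

theorem card_filter_dotProduct_eq_le {F ι : Type*} [Field F] [Fintype F] [DecidableEq F]
    [Fintype ι] [DecidableEq ι] {w : ι → F} {c : F} (h : w ≠ 0 ∨ c ≠ 0) :
    #{u : ι → F | w ⬝ᵥ u = c} ≤ Fintype.card F ^ (Fintype.card ι - 1) := by
  rcases eq_or_ne w 0 with rfl | hw
  · have hc : c ≠ 0 := h.resolve_left (not_not_intro rfl)
    simp [eq_comm, hc]
  obtain ⟨j, hj⟩ := Function.ne_iff.mp hw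
  have hcard : Fintype.card ({i // i ≠ j} → F) = Fintype.card F ^ (Fintype.card ι - 1) := by
    rw [Fintype.card_fun, Fintype.card_subtype_compl, Fintype.card_subtype_eq]
  rw [← hcard, ← card_univ]
  refine card_le_card_of_injOn (fun u (i : {i // i ≠ j}) => u i) (fun _ _ => mem_univ _) ?_
  intro u hu u' hu' hoff
  simp only [mem_coe, mem_filter, mem_univ, true_and] at hu hu'
  -- `u - u'` is supported at `j`, so `w ⬝ᵥ (u - u') = w j * (u j - u' j)`.
  have hsingle : u - u' = Pi.single j (u j - u' j) := by
    ext i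
    rcases eq_or_ne i j with rfl | hij
    · simp
    · simp [hij, congrFun hoff ⟨i, hij⟩]
  have hzero : w j * (u j - u' j) = 0 := by
    rw [← dotProduct_single, ← hsingle, dotProduct_sub, hu, hu', sub_self]
  rw [← sub_eq_zero, hsingle, (mul_eq_zero.mp hzero).resolve_left hj, Pi.single_zero]

theorem dotProduct_eq_of_snoc_sum_sq_sub_snoc_sum_sq_eq {R : Type*} [CommRing R] {d : ℕ}
    {u v : Fin d → R} {x : Fin (d + 1) → R}
    (h : Fin.snoc u (∑ i, u i ^ 2) - Fin.snoc v (∑ i, v i ^ 2) = x) :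
    ((2 : R) • Fin.init x) ⬝ᵥ u = x (Fin.last d) + Fin.init x ⬝ᵥ Fin.init x := by
  have hinit : v = u - Fin.init x := by
    rw [← h]; ext i; simp [Fin.init]
  have hlast : x (Fin.last d) = ∑ i, u i ^ 2 - ∑ i, v i ^ 2 := by
    rw [← h]; simp
  rw [hlast, hinit, ← sum_sub_distrib]
  simp only [dotProduct, Pi.smul_apply, Pi.sub_apply, smul_eq_mul, ← sum_add_distrib]
  exact sum_congr rfl fun i _ => by ring

def paraboloid (F : Type*) [CommRing F] [Fintype F] [DecidableEq F] (d : ℕ) :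
    Finset (Fin (d + 1) → F) :=
  image (fun a : Fin d → F => Fin.snoc a (∑ i, a i ^ 2)) univ

theorem card_paraboloid_pairs_sub_eq_le {F : Type*} [CommRing F] [Fintype F] [DecidableEq F]
    {d : ℕ} (x : Fin (d + 1) → F) :
    #{p ∈ paraboloid F d ×ˢ paraboloid F d | p.1 - p.2 = x} ≤
      #{u : Fin d → F |
        ((2 : F) • Fin.init x) ⬝ᵥ u = x (Fin.last d) + Fin.init x ⬝ᵥ Fin.init x} := by
  refine card_le_card_of_injOn (fun p => Fin.init p.1) ?_ ?_
  · rintro ⟨_, _⟩ hp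
    simp only [paraboloid, mem_coe, mem_filter, mem_product, mem_image, mem_univ,
      true_and] at hp ⊢
    obtain ⟨⟨⟨u, rfl⟩, ⟨v, rfl⟩⟩, huv⟩ := hp
    simpa using dotProduct_eq_of_snoc_sum_sq_sub_snoc_sum_sq_eq huv
  · rintro ⟨_, b⟩ hp ⟨_, b'⟩ hp' heq
    simp only [paraboloid, mem_coe, mem_filter, mem_product, mem_image, mem_univ,
      true_and] at hp hp'
    obtain ⟨⟨⟨u, rfl⟩, -⟩, hb⟩ := hp
    obtain ⟨⟨⟨u', rfl⟩, -⟩, hb'⟩ := hp'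
    obtain rfl : u = u' := by simpa using heq
    exact Prod.ext rfl (sub_right_injective (hb.trans hb'.symm))

theorem paraboloid_diff_bound_general {F : Type*} [Field F] [Fintype F] [DecidableEq F]
    {q d : ℕ} (hq : Fintype.card F = q) (hchar : ringChar F ≠ 2)
    (A : Finset (Fin (d + 1) → F))
    (hA : A = Finset.image (fun a : Fin d → F => Fin.snoc a (∑ i, a i ^ 2)) Finset.univ)
    (x : Fin (d + 1) → F) (hx : x ≠ 0) :
    ((A ×ˢ A).filter (fun p => p.1 - p.2 = x)).card ≤ q ^ (d - 1) := by
  subst hA hq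
  have hnontrivial :
      (2 : F) • Fin.init x ≠ 0 ∨ x (Fin.last d) + Fin.init x ⬝ᵥ Fin.init x ≠ 0 := by
    by_contra! h
    obtain ⟨hinit, hlast⟩ := h
    rw [smul_eq_zero_iff_right (Ring.two_ne_zero hchar)] at hinit
    rw [hinit, zero_dotProduct, add_zero] at hlast
    exact hx (funext fun i => Fin.lastCases hlast (fun i => congrFun hinit i) i)
  calc _ ≤ _ := card_paraboloid_pairs_sub_eq_le x
    _ ≤ Fintype.card F ^ (Fintype.card (Fin d) - 1) := card_filter_dotProduct_eq_le hnontrivial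
    _ = _ := by rw [Fintype.card_fin]

theorem paraboloid_diff_bound {F : Type*} [Field F] [Fintype F] [DecidableEq F]
    {q d : ℕ} (hq : Fintype.card F = q) (hchar : ringChar F ≠ 2) (hd : 1 ≤ d)
    (A : Finset (Fin (d + 1) → F))
    (hA : A = Finset.image (fun a : Fin d → F => Fin.snoc a (∑ i, a i ^ 2)) Finset.univ)
    (x : Fin (d + 1) → F) (hx : x ≠ 0) :
    ((A ×ˢ A).filter (fun p => p.1 - p.2 = x)).card ≤ q ^ (d - 1) :=
  paraboloid_diff_bound_general hq hchar A hA x hx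
end

section
/- Let q be an odd prime power, 0 < ε < 1, and P ⊆ F_q^d with |P| ≥ ε^{-1}(1−ε)^{1/2} q^{(d+1)/2}. Then (1/|P|) ∑_{p ∈ P} |Δ_p(P)| > (1−ε)q, where Δ_p(P) = {‖x−p‖ : x ∈ P} and ‖y‖ = y₁² + ⋯ + y_d². -/
/-!
Let `m_p(t)` be the number of `x ∈ P` with `‖x - p‖ = t` and `E(p) = ∑_t m_p(t)²`.
Cauchy–Schwarz over the pairs `(p, t)` with `p ∈ P`, `t ∈ Δ_p(P)`, whose weights `m_p(t)` sum
to `|P|²`, gives `|P|⁴ ≤ (∑_{p ∈ P} |Δ_p(P)|) (∑_{p ∈ P} E(p))`.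
Since `q` is odd, the points equidistant from `x ≠ y` form an affine hyperplane, so
`q ∑_p E(p) ≤ |P| q^(d+1) + |P|² q^d` when `p` runs over all of `F_q^d`; as `q E(p) ≥ |P|²`
for every `p`, dropping the `p ∉ P` leaves `q ∑_{p ∈ P} E(p) ≤ |P|³ + |P| q^(d+1)`.
The size of `P` makes the resulting lower bound on the average exceed `(1 - ε) q`.
-/

open Finset

theorem card_filter_dotProduct_eq_mul_card {R ι : Type*} [DivisionRing R] [Fintype R]
    [DecidableEq R] [Fintype ι] [DecidableEq ι] {a : ι → R} (ha : a ≠ 0) (b : R) :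
    #{p : ι → R | a ⬝ᵥ p = b} * Fintype.card R = Fintype.card R ^ Fintype.card ι := by
  obtain ⟨i, hai⟩ := Function.ne_iff.mp ha
  let f : (ι → R) →+ R := AddMonoidHom.mk' (a ⬝ᵥ ·) (dotProduct_add a)
  have hf : ∀ c, c ∈ Set.range f := fun c =>
    ⟨Pi.single i ((a i)⁻¹ * c), by
      simp [f, dotProduct_single, ← mul_assoc, mul_inv_cancel₀ hai]⟩
  calc #{p : ι → R | a ⬝ᵥ p = b} * Fintype.card R
      = ∑ c : R, #{p : ι → R | f p = c} := by
        rw [sum_congr rfl fun c _ => AddMonoidHom.card_fiber_eq_of_mem_range f (hf c) (hf b),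
          sum_const, card_univ, smul_eq_mul, mul_comm]
        rfl
    _ = Fintype.card R ^ Fintype.card ι := by
        rw [← card_eq_sum_card_fiberwise (fun _ _ => mem_coe.2 (mem_univ _)), card_univ,
          Fintype.card_fun]

section PinnedDistances

variable {F ι : Type*} [Field F] [Fintype ι]

def sqDist (x p : ι → F) : F := ∑ i, (x i - p i) ^ 2

theorem sqDist_eq_sqDist_iff (x y p : ι → F) :
    sqDist x p = sqDist y p ↔ ((2 : F) • (y - x)) ⬝ᵥ p = y ⬝ᵥ y - x ⬝ᵥ x := by
  rw [← sub_eq_zero, ← sub_eq_zero (a := ((2 : F) • (y - x)) ⬝ᵥ p)]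
  simp only [sqDist, dotProduct, ← sum_sub_distrib]
  congr! 1
  refine sum_congr rfl fun i _ => ?_
  simp only [Pi.smul_apply, Pi.sub_apply, smul_eq_mul]
  ring

variable [DecidableEq F] (P : Finset (ι → F))

def pinnedDistances (p : ι → F) : Finset F := P.image (sqDist · p)

def distMult (p : ι → F) (t : F) : ℕ := #{x ∈ P | sqDist x p = t}

theorem sum_pinnedDistances_distMult (p : ι → F) :
    ∑ t ∈ pinnedDistances P p, distMult P p t = #P :=
  (card_eq_sum_card_image _ _).symm

variable [Fintype F]

def pinnedEnergy (p : ι → F) : ℕ := ∑ t, distMult P p t ^ 2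

theorem sum_distMult (p : ι → F) : ∑ t, distMult P p t = #P :=
  (card_eq_sum_card_fiberwise fun _ _ => mem_coe.2 (mem_univ _)).symm

theorem pinnedEnergy_eq_sum_distMult (p : ι → F) :
    pinnedEnergy P p = ∑ x ∈ P, distMult P p (sqDist x p) := by
  rw [← sum_fiberwise P (sqDist · p)]
  refine sum_congr rfl fun t _ => ?_
  rw [sum_congr rfl fun x hx => congrArg (distMult P p) (mem_filter.1 hx).2, sum_const,
    smul_eq_mul, sq]
  rfl

theorem sq_card_le_card_mul_pinnedEnergy (p : ι → F) :
    #P ^ 2 ≤ Fintype.card F * pinnedEnergy P p := by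
  rw [← sum_distMult P p, ← card_univ]
  exact sq_sum_le_card_mul_sum_sq

theorem card_pow_four_le_sum_card_pinnedDistances_mul :
    #P ^ 4 ≤ (∑ p ∈ P, #(pinnedDistances P p)) * ∑ p ∈ P, pinnedEnergy P p := by
  have hsum : ∑ z ∈ P.sigma (pinnedDistances P), distMult P z.1 z.2 = #P ^ 2 := by
    rw [sum_sigma, sum_congr rfl fun p _ => sum_pinnedDistances_distMult P p, sum_const,
      smul_eq_mul, sq]
  calc #P ^ 4 = (∑ z ∈ P.sigma (pinnedDistances P), distMult P z.1 z.2) ^ 2 := by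
        rw [hsum, ← pow_mul]
    _ ≤ #(P.sigma (pinnedDistances P)) *
          ∑ z ∈ P.sigma (pinnedDistances P), distMult P z.1 z.2 ^ 2 :=
        sq_sum_le_card_mul_sum_sq
    _ ≤ _ := by
        rw [card_sigma, sum_sigma]
        gcongr with p
        exact sum_le_sum_of_subset (subset_univ _)

variable [DecidableEq ι]

theorem card_filter_sqDist_eq_mul_card (hF : ringChar F ≠ 2) {x y : ι → F} (hxy : x ≠ y) :
    #{p : ι → F | sqDist x p = sqDist y p} * Fintype.card F =
      Fintype.card F ^ Fintype.card ι := by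
  simp only [sqDist_eq_sqDist_iff]
  refine card_filter_dotProduct_eq_mul_card ?_ _
  exact smul_ne_zero (Ring.two_ne_zero hF) (sub_ne_zero.2 hxy.symm)

theorem sum_univ_pinnedEnergy_eq :
    ∑ p, pinnedEnergy P p =
      ∑ x ∈ P, ∑ y ∈ P, #{p : ι → F | sqDist y p = sqDist x p} := by
  simp only [pinnedEnergy_eq_sum_distMult, distMult, card_filter]
  rw [sum_comm]
  exact sum_congr rfl fun x _ => sum_comm

theorem card_mul_sum_univ_pinnedEnergy_le (hF : ringChar F ≠ 2) :
    Fintype.card F * ∑ p, pinnedEnergy P p ≤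
      #P * Fintype.card F ^ (Fintype.card ι + 1) + #P ^ 2 * Fintype.card F ^ Fintype.card ι := by
  set q := Fintype.card F
  have hpair : ∀ x y : ι → F, q * #{p : ι → F | sqDist y p = sqDist x p} ≤
      (if x = y then q ^ (Fintype.card ι + 1) else 0) + q ^ Fintype.card ι := by
    intro x y
    by_cases hxy : x = y
    · simp [hxy, q, pow_succ']
    · rw [if_neg hxy, zero_add, mul_comm, card_filter_sqDist_eq_mul_card hF (Ne.symm hxy)]
  calc q * ∑ p, pinnedEnergy P p
      ≤ ∑ x ∈ P, ∑ y ∈ P,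
          ((if x = y then q ^ (Fintype.card ι + 1) else 0) + q ^ Fintype.card ι) := by
        rw [sum_univ_pinnedEnergy_eq P, mul_sum]
        exact sum_le_sum fun x _ => (mul_sum _ _ _).trans_le (sum_le_sum fun y _ => hpair x y)
    _ = #P * q ^ (Fintype.card ι + 1) + #P ^ 2 * q ^ Fintype.card ι := by
        simp [sum_add_distrib, sum_ite_eq, sq, mul_assoc]

theorem card_mul_sum_pinnedEnergy_le (hF : ringChar F ≠ 2) :
    Fintype.card F * ∑ p ∈ P, pinnedEnergy P p ≤
      #P ^ 3 + #P * Fintype.card F ^ (Fintype.card ι + 1) := by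
  set q := Fintype.card F
  have hcompl : #Pᶜ * #P ^ 2 ≤ q * ∑ p ∈ Pᶜ, pinnedEnergy P p := by
    rw [mul_sum, ← smul_eq_mul, ← sum_const]
    exact sum_le_sum fun p _ => sq_card_le_card_mul_pinnedEnergy P p
  have htotal := card_mul_sum_univ_pinnedEnergy_le P hF
  have hcard : #Pᶜ + #P = q ^ Fintype.card ι := by
    rw [card_compl_add_card, Fintype.card_fun]
  rw [← sum_add_sum_compl P, mul_add, ← hcard] at htotal
  nlinarith

end PinnedDistances

theorem one_sub_mul_lt_mul_sq_of_ge {ε c n : ℝ} (hε0 : 0 < ε) (hε1 : ε < 1) (hc : 0 < c)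
    (hn : n ≥ ε⁻¹ * √(1 - ε) * √c) : (1 - ε) * c < ε * n ^ 2 := by
  have h1ε : 0 < 1 - ε := sub_pos.2 hε1
  have hsq : ε⁻¹ ^ 2 * ((1 - ε) * c) ≤ n ^ 2 := by
    have := pow_le_pow_left₀ (by positivity) hn 2
    rwa [mul_pow, mul_pow, Real.sq_sqrt h1ε.le, Real.sq_sqrt hc.le, mul_assoc] at this
  calc (1 - ε) * c < ε⁻¹ * ((1 - ε) * c) :=
        lt_mul_of_one_lt_left (by positivity) ((one_lt_inv₀ hε0).2 hε1)
    _ = ε * (ε⁻¹ ^ 2 * ((1 - ε) * c)) := by field_simp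
    _ ≤ ε * n ^ 2 := by gcongr

theorem one_sub_mul_mul_lt_of_pow_four_le {ε q n c D T : ℝ} (hq : 0 < q) (hn : 0 < n)
    (hT0 : 0 ≤ T) (hcs : n ^ 4 ≤ D * T) (hT : q * T ≤ n ^ 3 + n * c)
    (hc : (1 - ε) * c < ε * n ^ 2) : (1 - ε) * q * n < D := by
  by_contra! hDle
  have hD : 0 ≤ D := by nlinarith [pow_pos hn 4]
  have h : q * n ^ 2 * n ^ 2 ≤ q * n ^ 2 * ((1 - ε) * (n ^ 2 + c)) := by
    calc q * n ^ 2 * n ^ 2 ≤ D * (q * T) := by nlinarith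
      _ ≤ D * (n ^ 3 + n * c) := mul_le_mul_of_nonneg_left hT hD
      _ ≤ (1 - ε) * q * n * (n ^ 3 + n * c) := by
        gcongr
        nlinarith
      _ = _ := by ring
  have := le_of_mul_le_mul_left h (by positivity)
  linarith

theorem pinned_distances_average_general {F : Type*} [Field F] [Fintype F] [DecidableEq F]
    {q d : ℕ} (hq : Fintype.card F = q) (hchar : ringChar F ≠ 2)
    (ε : ℝ) (hε0 : 0 < ε) (hε1 : ε < 1)
    (P : Finset (Fin d → F))
    (hP : (P.card : ℝ) ≥ ε⁻¹ * Real.sqrt (1 - ε) * Real.sqrt ((q : ℝ) ^ (d + 1))) :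
    (1 / (P.card : ℝ)) * ∑ p ∈ P, ((P.image (fun x => ∑ i, (x i - p i) ^ 2)).card : ℝ) >
      (1 - ε) * q := by
  have hq0 : (0 : ℝ) < q := by rw [← hq]; exact_mod_cast Fintype.card_pos
  have hn : (0 : ℝ) < #P := hP.trans_lt' (by have := sub_pos.2 hε1; positivity)
  have hcs : (#P : ℝ) ^ 4 ≤
      (∑ p ∈ P, (#(pinnedDistances P p) : ℝ)) * ∑ p ∈ P, (pinnedEnergy P p : ℝ) := by
    exact_mod_cast card_pow_four_le_sum_card_pinnedDistances_mul P
  have henergy : (q : ℝ) * ∑ p ∈ P, (pinnedEnergy P p : ℝ) ≤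
      (#P : ℝ) ^ 3 + #P * (q : ℝ) ^ (d + 1) := by
    have := card_mul_sum_pinnedEnergy_le P hchar
    rw [hq, Fintype.card_fin] at this
    exact_mod_cast this
  change (1 - ε) * q < 1 / (#P : ℝ) * ∑ p ∈ P, (#(pinnedDistances P p) : ℝ)
  rw [one_div, inv_mul_eq_div, lt_div_iff₀ hn]
  exact one_sub_mul_mul_lt_of_pow_four_le hq0 hn (by positivity) hcs henergy
    (one_sub_mul_lt_mul_sq_of_ge hε0 hε1 (by positivity) hP)

theorem pinned_distances_average {F : Type*} [Field F] [Fintype F] [DecidableEq F]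
    {q d : ℕ} (hq : Fintype.card F = q) (hchar : ringChar F ≠ 2) (hd : 1 ≤ d)
    (ε : ℝ) (hε0 : 0 < ε) (hε1 : ε < 1)
    (P : Finset (Fin d → F))
    (hP : (P.card : ℝ) ≥ ε⁻¹ * Real.sqrt (1 - ε) * Real.sqrt ((q : ℝ) ^ (d + 1))) :
    (1 / (P.card : ℝ)) * ∑ p ∈ P, ((P.image (fun x => ∑ i, (x i - p i) ^ 2)).card : ℝ) >
      (1 - ε) * q :=
  pinned_distances_average_general hq hchar ε hε0 hε1 P hP
end

section
/- Let q be an odd prime power, 0 < α < 1, and P ⊆ F_q^d with |P| ≥ α^{-2}(1−α²)^{1/2} q^{(d+1)/2}. Then the set of points p ∈ P with |Δ_p(P)| > (1−α)q has size at least (1−α)|P|. -/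
/-!
For a pin `p` let `ν_p(t)` be the number of `x ∈ P` at squared distance `t` from `p`, and
`E(p) = ∑ₜ ν_p(t)²`. Cauchy–Schwarz gives `|P|² ≤ |Δ_p(P)| E(p)` and `|P|² ≤ q E(p)`.
Summing `E(p)` over all pins `p ∈ F_q^d` counts triples `(x, y, p)` with `p` on the
perpendicular bisector of `x` and `y`, an affine hyperplane when `x ≠ y` (this needs odd
characteristic); hence `∑_p (q E(p) - |P|²) ≤ q^(d+1) |P|`. Every pin with
`|Δ_p(P)| ≤ (1 - α) q` contributes at least `α |P|² / (1 - α)` to this sum of nonnegative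
terms, so there are at most `(1 - α) q^(d+1) / (α |P|) ≤ α |P|` such pins.
-/

open Finset

section Hyperplane

variable {ι F : Type*} [Fintype ι] [Field F]

theorem sum_sub_sq_eq_sum_sub_sq_iff (x y p : ι → F) :
    ∑ i, (x i - p i) ^ 2 = ∑ i, (y i - p i) ^ 2 ↔
      (fun i => 2 * (x i - y i)) ⬝ᵥ p = ∑ i, (x i ^ 2 - y i ^ 2) := by
  have key : ∑ i, (x i - p i) ^ 2 - ∑ i, (y i - p i) ^ 2 =
      ∑ i, (x i ^ 2 - y i ^ 2) - (fun i => 2 * (x i - y i)) ⬝ᵥ p := by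
    rw [dotProduct, ← sum_sub_distrib, ← sum_sub_distrib]
    exact sum_congr rfl fun i _ => by ring
  rw [← sub_eq_zero, key, sub_eq_zero, eq_comm]

variable [DecidableEq ι] [Fintype F] [DecidableEq F]

theorem card_filter_dotProduct_eq_mul_card_le {a : ι → F} (ha : a ≠ 0) (c : F) :
    #{p : ι → F | a ⬝ᵥ p = c} * Fintype.card F ≤ Fintype.card (ι → F) := by
  obtain ⟨i₀, hi₀⟩ := Function.ne_iff.mp ha
  let split := Equiv.funSplitAt i₀ F
  have hsplit :
      Fintype.card (ι → F) = Fintype.card F * Fintype.card ({j // j ≠ i₀} → F) := by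
    rw [Fintype.card_congr split, Fintype.card_prod]
  rw [hsplit, mul_comm]
  gcongr
  refine (card_le_card_of_injOn (fun p => (split p).2) (fun _ _ => mem_coe.2 (mem_univ _))
    fun p hp p' hp' hpp' => split.injective (Prod.ext ?_ hpp')).trans_eq card_univ
  simp only [coe_filter, mem_univ, true_and, Set.mem_ofPred_eq] at hp hp'
  have hdiff : p - p' = Pi.single i₀ (p i₀ - p' i₀) := by
    ext j
    by_cases hj : j = i₀
    · subst hj; simp
    · simp only [Pi.sub_apply, Pi.single_apply, hj, if_false]
      exact sub_eq_zero.2 (congrFun hpp' ⟨j, hj⟩)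
  have : a i₀ * (p i₀ - p' i₀) = 0 := by
    rw [← dotProduct_single, ← hdiff, dotProduct_sub, hp, hp', sub_self]
  exact sub_eq_zero.1 ((mul_eq_zero.1 this).resolve_left hi₀)

theorem card_bisector_mul_card_le (hF : ringChar F ≠ 2) {x y : ι → F} (hxy : x ≠ y) :
    #{p : ι → F | ∑ i, (x i - p i) ^ 2 = ∑ i, (y i - p i) ^ 2} * Fintype.card F ≤
      Fintype.card (ι → F) := by
  obtain ⟨i, hi⟩ := Function.ne_iff.mp hxy
  simp_rw [sum_sub_sq_eq_sum_sub_sq_iff x y]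
  refine card_filter_dotProduct_eq_mul_card_le (Function.ne_iff.2 ⟨i, ?_⟩) _
  exact mul_ne_zero (Ring.two_ne_zero hF) (sub_ne_zero.2 hi)

end Hyperplane

section Collisions

variable {V β : Type*} [Fintype β] [DecidableEq β]

def collisionCount (P : Finset V) (g : V → β) : ℕ :=
  ∑ t, #{x ∈ P | g x = t} ^ 2

theorem collisionCount_eq_sum_card_filter (P : Finset V) (g : V → β) :
    collisionCount P g = ∑ x ∈ P, #{y ∈ P | g y = g x} := by
  calc collisionCount P g = ∑ t, ∑ x ∈ P with g x = t, #{y ∈ P | g y = t} := by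
        simp only [collisionCount, sq, sum_const, smul_eq_mul]
    _ = _ := sum_fiberwise' P g fun t => #{y ∈ P | g y = t}

theorem sq_card_le_card_image_mul_collisionCount (P : Finset V) (g : V → β) :
    #P ^ 2 ≤ #(P.image g) * collisionCount P g := by
  calc #P ^ 2 = (∑ t ∈ P.image g, #{x ∈ P | g x = t}) ^ 2 := by
        rw [← card_eq_sum_card_image]
    _ ≤ #(P.image g) * ∑ t ∈ P.image g, #{x ∈ P | g x = t} ^ 2 := sq_sum_le_card_mul_sum_sq
    _ ≤ #(P.image g) * collisionCount P g := by
        gcongr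
        exact sum_le_sum_of_subset (subset_univ _)

-- `f x p` plays the role of the distance from the point `x` to the pin `p`.
variable [Fintype V] (f : V → V → β)

theorem sum_collisionCount_eq (P : Finset V) :
    ∑ p, collisionCount P (f · p) = ∑ x ∈ P, ∑ y ∈ P, #{p | f y p = f x p} := by
  simp only [collisionCount_eq_sum_card_filter, card_filter]
  rw [sum_comm]
  exact sum_congr rfl fun x _ => sum_comm

variable [DecidableEq V]

theorem card_mul_sum_collisionCount_le
    (hf : ∀ x y, x ≠ y → #{p | f x p = f y p} * Fintype.card β ≤ Fintype.card V)
    (P : Finset V) :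
    (∑ p, collisionCount P (f · p)) * Fintype.card β ≤
      #P * Fintype.card V * Fintype.card β + #P ^ 2 * Fintype.card V := by
  have hrow : ∀ x ∈ P, (∑ y ∈ P, #{p | f y p = f x p}) * Fintype.card β ≤
      Fintype.card V * Fintype.card β + #P * Fintype.card V := by
    intro x hx
    rw [← add_sum_erase P _ hx, add_mul, sum_mul]
    gcongr
    · exact card_le_univ _
    · calc ∑ y ∈ P.erase x, #{p | f y p = f x p} * Fintype.card β
          ≤ #(P.erase x) * Fintype.card V :=
            sum_le_card_nsmul _ _ _ fun y hy => hf y x (ne_of_mem_erase hy)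
        _ ≤ #P * Fintype.card V := by gcongr; exact erase_subset x P
  calc (∑ p, collisionCount P (f · p)) * Fintype.card β
      ≤ ∑ _x ∈ P, (Fintype.card V * Fintype.card β + #P * Fintype.card V) := by
        rw [sum_collisionCount_eq, sum_mul]
        exact sum_le_sum hrow
    _ = _ := by rw [sum_const, smul_eq_mul]; ring

theorem card_pins_with_few_values_mul_le
    (hf : ∀ x y, x ≠ y → #{p | f x p = f y p} * Fintype.card β ≤ Fintype.card V)
    (P : Finset V) {k : ℝ} (hk : 0 ≤ k) :
    (#{p | (#(P.image (f · p)) : ℝ) ≤ k} : ℝ) * (Fintype.card β - k) * #P ≤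
      k * Fintype.card β * Fintype.card V := by
  have hCS : ∀ p, (#P : ℝ) ^ 2 ≤ #(P.image (f · p)) * (collisionCount P (f · p) : ℝ) :=
    fun p => by exact_mod_cast sq_card_le_card_image_mul_collisionCount P (f · p)
  have himage : ∀ p, (#(P.image (f · p)) : ℝ) ≤ Fintype.card β :=
    fun p => by exact_mod_cast card_le_univ _
  have hsum : (∑ p, (collisionCount P (f · p) : ℝ)) * Fintype.card β ≤
      #P * Fintype.card V * Fintype.card β + #P ^ 2 * Fintype.card V := by
    exact_mod_cast card_mul_sum_collisionCount_le f hf P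
  set n : ℝ := (#P : ℝ)
  set q : ℝ := (Fintype.card β : ℝ)
  set C : V → ℝ := fun p => (collisionCount P (f · p) : ℝ)
  have hC : ∀ p, 0 ≤ C p := fun p => Nat.cast_nonneg _
  have hq : 0 ≤ q := Nat.cast_nonneg _
  have hexcess : ∀ p, 0 ≤ q * C p - n ^ 2 := fun p => by
    nlinarith [hCS p, mul_le_mul_of_nonneg_right (himage p) (hC p)]
  have hbad :
      ∀ p, (#(P.image (f · p)) : ℝ) ≤ k → (q - k) * n ^ 2 ≤ k * (q * C p - n ^ 2) :=
    fun p hp => by nlinarith [hCS p, mul_le_mul_of_nonneg_right hp (hC p)]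
  have htotal : ∑ p, (q * C p - n ^ 2) ≤ q * n * Fintype.card V := by
    rw [sum_sub_distrib, ← mul_sum, sum_const, card_univ, nsmul_eq_mul]
    linarith
  set B := ({p | (#(P.image (f · p)) : ℝ) ≤ k} : Finset V)
  have hB : (#B : ℝ) * (q - k) * n * n ≤ k * q * Fintype.card V * n :=
    calc (#B : ℝ) * (q - k) * n * n = ∑ _p ∈ B, (q - k) * n ^ 2 := by
          rw [sum_const, nsmul_eq_mul]; ring
      _ ≤ ∑ p ∈ B, k * (q * C p - n ^ 2) :=
          sum_le_sum fun p hp => hbad p (mem_filter.1 hp).2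
      _ ≤ ∑ p, k * (q * C p - n ^ 2) :=
          sum_le_sum_of_subset_of_nonneg (subset_univ B) fun p _ _ => mul_nonneg hk (hexcess p)
      _ ≤ k * q * Fintype.card V * n := by
          rw [← mul_sum]
          exact (mul_le_mul_of_nonneg_left htotal hk).trans_eq (by ring)
  rcases (show 0 ≤ n from Nat.cast_nonneg _).eq_or_lt with hn | hn
  · rw [← hn, mul_zero]
    positivity
  · exact le_of_mul_le_mul_right hB hn

theorem one_sub_mul_card_le_card_pins_with_many_values [Nonempty β]
    (hf : ∀ x y, x ≠ y → #{p | f x p = f y p} * Fintype.card β ≤ Fintype.card V)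
    (P : Finset V) {α : ℝ} (hα0 : 0 < α) (hα1 : α < 1)
    (hP : (1 - α) * Fintype.card β * Fintype.card V ≤ α ^ 2 * #P ^ 2) :
    (1 - α) * #P ≤ #{p ∈ P | (1 - α) * Fintype.card β < #(P.image (f · p))} := by
  set q : ℝ := (Fintype.card β : ℝ)
  have hq : 0 < q := Nat.cast_pos.2 Fintype.card_pos
  have hfew := card_pins_with_few_values_mul_le f hf P (mul_nonneg (sub_pos.2 hα1).le hq.le)
  set few := ({p | (#(P.image (f · p)) : ℝ) ≤ (1 - α) * q} : Finset V)
  set good := {p ∈ P | (1 - α) * q < #(P.image (f · p))}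
  set bad := {p ∈ P | ¬ (1 - α) * q < #(P.image (f · p))}
  have hsplit : (#good : ℝ) + #bad = #P := by
    exact_mod_cast card_filter_add_card_filter_not _
  have hbad : (#bad : ℝ) ≤ #few := by
    exact_mod_cast card_le_card fun p hp => by simp_all [bad, few]
  rcases (show (0 : ℝ) ≤ #P from Nat.cast_nonneg _).eq_or_lt with hn | hn
  · rw [← hn, mul_zero]
    positivity
  have hbad_le : (#bad : ℝ) ≤ α * #P := by
    refine le_of_mul_le_mul_right ?_ (by positivity : 0 < α * q * #P)
    calc (#bad : ℝ) * (α * q * #P) ≤ #few * (α * q * #P) := by gcongr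
      _ = #few * (q - (1 - α) * q) * #P := by ring
      _ ≤ (1 - α) * q * q * Fintype.card V := hfew
      _ = q * ((1 - α) * q * Fintype.card V) := by ring
      _ ≤ q * (α ^ 2 * #P ^ 2) := by gcongr
      _ = α * #P * (α * q * #P) := by ring
  linarith

end Collisions

theorem one_sub_mul_le_sq_mul_sq_of_le {α Q N : ℝ} (hα0 : 0 < α) (hα1 : α < 1) (hQ : 0 ≤ Q)
    (hN : N ≥ (α ^ 2)⁻¹ * √(1 - α ^ 2) * √Q) : (1 - α) * Q ≤ α ^ 2 * N ^ 2 := by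
  have hsq := pow_le_pow_left₀ (by positivity) hN 2
  rw [mul_pow, mul_pow, Real.sq_sqrt (by nlinarith), Real.sq_sqrt hQ] at hsq
  calc (1 - α) * Q ≤ (1 - α ^ 2) / α ^ 2 * Q := by
        gcongr
        rw [le_div_iff₀ (by positivity)]
        nlinarith [mul_pos (mul_pos hα0 (sub_pos.2 hα1)) (sub_pos.2 hα1)]
    _ = α ^ 2 * ((α ^ 2)⁻¹ ^ 2 * (1 - α ^ 2) * Q) := by field_simp
    _ ≤ α ^ 2 * N ^ 2 := by gcongr

theorem many_pins_many_distances_general {F : Type*} [Field F] [Fintype F] [DecidableEq F]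
    {q d : ℕ} (hq : Fintype.card F = q) (hchar : ringChar F ≠ 2)
    (α : ℝ) (hα0 : 0 < α) (hα1 : α < 1)
    (P : Finset (Fin d → F))
    (hP : (P.card : ℝ) ≥ (α ^ 2)⁻¹ * Real.sqrt (1 - α ^ 2) * Real.sqrt ((q : ℝ) ^ (d + 1))) :
    ((P.filter (fun p =>
        ((P.image (fun x => ∑ i, (x i - p i) ^ 2)).card : ℝ) > (1 - α) * q)).card : ℝ) ≥
      (1 - α) * P.card := by
  have hsize := one_sub_mul_le_sq_mul_sq_of_le hα0 hα1 (by positivity) hP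
  subst hq
  refine one_sub_mul_card_le_card_pins_with_many_values
    (fun x p : Fin d → F => ∑ i, (x i - p i) ^ 2) (fun _ _ => card_bisector_mul_card_le hchar)
    P hα0 hα1 ?_
  rw [Fintype.card_fun, Fintype.card_fin, Nat.cast_pow, mul_assoc, ← pow_succ']
  exact hsize

theorem many_pins_many_distances {F : Type*} [Field F] [Fintype F] [DecidableEq F]
    {q d : ℕ} (hq : Fintype.card F = q) (hchar : ringChar F ≠ 2) (hd : 1 ≤ d)
    (α : ℝ) (hα0 : 0 < α) (hα1 : α < 1)
    (P : Finset (Fin d → F))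
    (hP : (P.card : ℝ) ≥ (α ^ 2)⁻¹ * Real.sqrt (1 - α ^ 2) * Real.sqrt ((q : ℝ) ^ (d + 1))) :
    ((P.filter (fun p =>
        ((P.image (fun x => ∑ i, (x i - p i) ^ 2)).card : ℝ) > (1 - α) * q)).card : ℝ) ≥
      (1 - α) * P.card :=
  many_pins_many_distances_general hq hchar α hα0 hα1 P hP
end

section
/- Let q be an odd prime power and P ⊆ F_q² with |P| ≥ 5q. Then P determines at least 4q³/9 distinct circles, where P determines a circle C if some three points of P lie on C (equivalently, C contains at least 3 points of P). -/
/-!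
Let `m(C)` be the number of points of `P` on the circle `C` and `n = |P|`. Every point lies on
`q²` circles and, in odd characteristic, two distinct points lie on exactly `q` common circles
(their centres form the perpendicular bisector). Double counting gives `∑ m(C) = n q²` and
`∑ m(C)(m(C) - 1) = q n (n - 1)`. Circles with at most two points of `P` carry at most `2 q³`
incidences, so the `N` rich circles carry at least `n q² - 2 q³ + 2 N` of them, and Cauchy–Schwarz
over the rich circles turns the two moments into a quadratic inequality for `N` that forces
`N ≥ 4 q³ / 9` once `n ≥ 5 q`.
-/

open Finset

section RichBlocks

variable {α β : Type*} [Fintype β] (I : α → β → Prop) [∀ a b, Decidable (I a b)] (P : Finset α)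

def richBlocks : Finset β := {b | 3 ≤ #{a ∈ P | I a b}}

theorem sum_card_filter_eq_card_mul {r : ℕ} (hr : ∀ a ∈ P, #{b | I a b} = r) :
    ∑ b, #{a ∈ P | I a b} = #P * r :=
  (sum_card_bipartiteAbove_eq_sum_card_bipartiteBelow (s := P) (t := univ) (r := I)).symm.trans
    (sum_const_nat hr)

theorem sum_card_offDiag_filter_eq_card_offDiag_mul {l : ℕ}
    (hl : ∀ a ∈ P, ∀ a' ∈ P, a ≠ a' → #{b | I a b ∧ I a' b} = l) :
    ∑ b, #{a ∈ P | I a b}.offDiag = #P.offDiag * l := by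
  have hoffDiag : ∀ b, {a ∈ P | I a b}.offDiag = {z ∈ P.offDiag | I z.1 b ∧ I z.2 b} := fun b => by
    ext z
    simp only [mem_offDiag, mem_filter]
    tauto
  simp_rw [hoffDiag]
  exact sum_card_filter_eq_card_mul (fun z b => I z.1 b ∧ I z.2 b) P.offDiag
    fun z hz => hl z.1 (mem_offDiag.1 hz).1 z.2 (mem_offDiag.1 hz).2.1 (mem_offDiag.1 hz).2.2

theorem card_mul_add_two_mul_card_richBlocks_le {r : ℕ} (hr : ∀ a ∈ P, #{b | I a b} = r) :
    #P * r + 2 * #(richBlocks I P) ≤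
      ∑ b ∈ richBlocks I P, #{a ∈ P | I a b} + 2 * Fintype.card β := by
  have hpoor : ∑ b with ¬ 3 ≤ #{a ∈ P | I a b}, #{a ∈ P | I a b} ≤
      #{b | ¬ 3 ≤ #{a ∈ P | I a b}} * 2 :=
    sum_le_card_nsmul _ _ 2 fun b hb => by have := (mem_filter.1 hb).2; omega
  have hsum := sum_filter_add_sum_filter_not univ (fun b => 3 ≤ #{a ∈ P | I a b})
    fun b => #{a ∈ P | I a b}
  have hcard := card_filter_add_card_filter_not (s := univ) fun b => 3 ≤ #{a ∈ P | I a b}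
  rw [sum_card_filter_eq_card_mul I P hr] at hsum
  rw [card_univ] at hcard
  unfold richBlocks
  omega

theorem sum_richBlocks_sq_le {l : ℕ}
    (hl : ∀ a ∈ P, ∀ a' ∈ P, a ≠ a' → #{b | I a b ∧ I a' b} = l) :
    ∑ b ∈ richBlocks I P, #{a ∈ P | I a b} ^ 2 ≤
      #P.offDiag * l + ∑ b ∈ richBlocks I P, #{a ∈ P | I a b} := by
  have hsq : ∀ s : Finset α, #s ^ 2 = #s.offDiag + #s := fun s => by
    rw [offDiag_card, sq, Nat.sub_add_cancel (Nat.le_mul_self _)]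
  simp_rw [hsq, sum_add_distrib, ← sum_card_offDiag_filter_eq_card_offDiag_mul I P hl]
  gcongr
  exact subset_univ _

theorem richBlocks_quadratic_le {r l : ℕ} (hr : ∀ a ∈ P, #{b | I a b} = r)
    (hl : ∀ a ∈ P, ∀ a' ∈ P, a ≠ a' → #{b | I a b ∧ I a' b} = l)
    (hP : 2 * Fintype.card β ≤ #P * r) :
    ((#P * r - 2 * Fintype.card β + 2 * #(richBlocks I P) : ℝ) *
      (#P * r - 2 * Fintype.card β + #(richBlocks I P))) ≤
      l * (#P * (#P - 1)) * #(richBlocks I P) := by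
  set S := richBlocks I P
  have h1 := card_mul_add_two_mul_card_richBlocks_le I P hr
  have h2 := sum_richBlocks_sq_le I P hl
  have h3 := sq_sum_le_card_mul_sum_sq (s := S) (f := fun b => #{a ∈ P | I a b})
  set A := ∑ b ∈ S, #{a ∈ P | I a b}
  set Q := ∑ b ∈ S, #{a ∈ P | I a b} ^ 2
  have hoffDiag : (#P.offDiag : ℝ) = #P * (#P - 1) := by
    rw [offDiag_card, Nat.cast_sub (Nat.le_mul_self _)]; push_cast; ring
  have r1 : (#P * r + 2 * #S : ℝ) ≤ A + 2 * Fintype.card β := by exact_mod_cast h1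
  have r2 : (Q : ℝ) ≤ #P * (#P - 1) * l + A := by rw [← hoffDiag]; exact_mod_cast h2
  have r3 : (A : ℝ) ^ 2 ≤ #S * Q := by exact_mod_cast h3
  have r4 : (2 * Fintype.card β : ℝ) ≤ #P * r := by exact_mod_cast hP
  have hS : (0 : ℝ) ≤ #S := Nat.cast_nonneg _
  -- `A (A - N) ≤ N l n (n - 1)`, and `t ↦ t (t - N)` is increasing for `t ≥ N / 2`, while
  -- `A ≥ n r - 2 |β| + 2 N ≥ N`.
  nlinarith

end RichBlocks

section Circles

variable {F : Type*} [Field F] [Fintype F] [DecidableEq F]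

def OnCircle (p : F × F) (t : F × F × F) : Prop :=
  (p.1 - t.1) ^ 2 + (p.2 - t.2.1) ^ 2 = t.2.2

instance (p : F × F) (t : F × F × F) : Decidable (OnCircle p t) :=
  inferInstanceAs (Decidable (_ = _))

theorem card_filter_linear_eq (α β γ : F) (h : α ≠ 0 ∨ β ≠ 0) :
    #{z : F × F | α * z.1 + β * z.2 = γ} = Fintype.card F := by
  rw [← card_univ]
  rcases h with hα | hβ
  · refine card_nbij' (fun z => z.2) (fun y => ((γ - β * y) / α, y)) (by simp)
      (fun y _ => by simp [mul_div_cancel₀ _ hα]) (fun z hz => ?_) (fun _ _ => rfl)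
    simp only [coe_filter, mem_univ, true_and, Set.mem_ofPred_eq] at hz
    refine Prod.ext ?_ rfl
    rw [div_eq_iff hα]
    linear_combination -hz
  · refine card_nbij' (fun z => z.1) (fun x => (x, (γ - α * x) / β)) (by simp)
      (fun x _ => by simp [mul_div_cancel₀ _ hβ]) (fun z hz => ?_) (fun _ _ => rfl)
    simp only [coe_filter, mem_univ, true_and, Set.mem_ofPred_eq] at hz
    refine Prod.ext rfl ?_
    rw [div_eq_iff hβ]
    linear_combination -hz

theorem card_onCircle_and_centre (p : F × F) (Q : F × F → Prop) [DecidablePred Q] :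
    #{t : F × F × F | OnCircle p t ∧ Q (t.1, t.2.1)} = #{c | Q c} :=
  card_bij' (fun t _ => (t.1, t.2.1)) (fun c _ => (c.1, c.2, (p.1 - c.1) ^ 2 + (p.2 - c.2) ^ 2))
    (fun t ht => by simp_all) (fun c hc => mem_filter.2 ⟨mem_univ _, rfl, (mem_filter.1 hc).2⟩)
    (fun t ht => Prod.ext rfl (Prod.ext rfl (mem_filter.1 ht).2.1)) (fun c _ => rfl)

theorem card_onCircle (p : F × F) : #{t : F × F × F | OnCircle p t} = Fintype.card F ^ 2 := by
  simpa [sq] using card_onCircle_and_centre p fun _ => True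

theorem card_onCircle_and_onCircle (hchar : ringChar F ≠ 2) {p p' : F × F} (hne : p ≠ p') :
    #{t : F × F × F | OnCircle p t ∧ OnCircle p' t} = Fintype.card F := by
  have h2 : (2 : F) ≠ 0 := Ring.two_ne_zero hchar
  have hbisector : ∀ t : F × F × F, OnCircle p t ∧ OnCircle p' t ↔ OnCircle p t ∧
      2 * (p'.1 - p.1) * t.1 + 2 * (p'.2 - p.2) * t.2.1 =
        p'.1 ^ 2 + p'.2 ^ 2 - p.1 ^ 2 - p.2 ^ 2 := by
    intro t
    unfold OnCircle
    constructor
    · rintro ⟨h, h'⟩; exact ⟨h, by linear_combination h - h'⟩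
    · rintro ⟨h, h'⟩; exact ⟨h, by linear_combination h - h'⟩
  simp_rw [hbisector]
  rw [card_onCircle_and_centre p (fun c => 2 * (p'.1 - p.1) * c.1 + 2 * (p'.2 - p.2) * c.2 = _),
    card_filter_linear_eq]
  by_contra! h
  exact hne (Prod.ext (by simpa [h2, sub_eq_zero, eq_comm] using h.1)
    (by simpa [h2, sub_eq_zero, eq_comm] using h.2))

end Circles

-- With `N = x q³` and `n = t q`, the difference of the two sides of `h` is convex in `x`,
-- decreasing on `[0, 4/9]` and still positive at `x = 4/9` when `t ≥ 5`.
theorem four_ninths_le {q n N : ℝ} (hq : 1 ≤ q) (hn : 5 * q ≤ n) (hN : 0 ≤ N)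
    (h : (n * q ^ 2 - 2 * q ^ 3 + 2 * N) * (n * q ^ 2 - 2 * q ^ 3 + N) ≤ q * (n * (n - 1)) * N) :
    4 * q ^ 3 / 9 ≤ N := by
  by_contra! hlt
  have hq0 : 0 < q := by linarith
  have hu : 0 ≤ n - 5 * q := by linarith
  have hw : 0 < 4 * q ^ 3 / 9 - N := by linarith
  nlinarith [mul_nonneg (mul_nonneg hu hu) (sq_nonneg q), mul_nonneg (mul_nonneg hw.le hu) hq0.le,
    mul_nonneg (mul_nonneg hw.le hq0.le) hq0.le, mul_nonneg hN hq0.le, pow_pos hq0 3,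
    mul_nonneg (mul_nonneg hu hq0.le) hq0.le]

theorem beck_for_circles {F : Type*} [Field F] [Fintype F] [DecidableEq F]
    {q : ℕ} (hq : Fintype.card F = q) (hchar : ringChar F ≠ 2)
    (P : Finset (F × F)) (hP : P.card ≥ 5 * q) :
    ((Finset.univ.filter (fun t : F × F × F =>
        3 ≤ (P.filter (fun p => (p.1 - t.1) ^ 2 + (p.2 - t.2.1) ^ 2 = t.2.2)).card)).card : ℝ) ≥
      4 * (q : ℝ) ^ 3 / 9 := by
  subst hq
  have hcircles : Fintype.card (F × F × F) = Fintype.card F ^ 3 := by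
    simp only [Fintype.card_prod]; ring
  have hpos : 1 ≤ Fintype.card F := Fintype.card_pos
  have hrich := richBlocks_quadratic_le OnCircle P (fun p _ => card_onCircle p)
    (fun _ _ _ _ hne => card_onCircle_and_onCircle hchar hne) (by rw [hcircles]; nlinarith)
  rw [hcircles] at hrich
  push_cast at hrich
  exact four_ninths_le (by exact_mod_cast hpos) (by exact_mod_cast hP) (Nat.cast_nonneg _) hrich
end

section
/- Let q be an odd prime power, P ⊆ F_q² with |P| = 5q, and let 𝒮 be the set of circles in F_q² containing at most 2 points of P (counted as parameter triples (a,b,c) ∈ F_q³). Then |𝒮| < 5q³/9. -/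
/-!
Let `n t` be the number of points of `P` on the circle `t`. Through a point pass `q²` circles
(any centre, the radius is then determined), and through two distinct points pass `q` circles
(the centre ranges over their perpendicular bisector, a line since `2 ≠ 0`). Hence
`∑ n = 5q³` and `∑ n² = 5q³ + 5q(5q - 1)q`, so `∑ (n - 5)² = 5q³ - 5q²`. Every circle with
`n ≤ 2` contributes at least `9` to this sum, so `9 |𝒮| ≤ 5q³ - 5q²`.
-/

open Finset

theorem Finset.card_filter_le_sub_mul_sq_le_sum_sq {ι : Type*} (s : Finset ι) (x : ι → ℝ)
    {μ δ : ℝ} (hδ : 0 ≤ δ) :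
    #{i ∈ s | x i ≤ μ - δ} * δ ^ 2 ≤ ∑ i ∈ s, (x i - μ) ^ 2 := by
  calc #{i ∈ s | x i ≤ μ - δ} * δ ^ 2
      ≤ ∑ i ∈ s with x i ≤ μ - δ, (x i - μ) ^ 2 := by
        rw [← nsmul_eq_mul]
        refine card_nsmul_le_sum _ _ _ fun i hi => ?_
        have : δ ≤ μ - x i := by linarith [(mem_filter.mp hi).2]
        nlinarith
    _ ≤ ∑ i ∈ s, (x i - μ) ^ 2 :=
        sum_le_sum_of_subset_of_nonneg (filter_subset _ s) fun _ _ _ => sq_nonneg _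

section LinearEquation

variable {F : Type*} [Field F] [Fintype F] [DecidableEq F]

theorem card_filter_linear_eq_of_left_ne_zero {a : F} (ha : a ≠ 0) (b c : F) :
    #{x : F × F | a * x.1 + b * x.2 = c} = Fintype.card F := by
  rw [← card_univ]
  refine card_bij' (fun x _ => x.2) (fun y _ => ((c - b * y) / a, y)) (fun _ _ => mem_univ _)
    (fun y _ => ?_) (fun x hx => ?_) (fun _ _ => rfl)
  · simp only [mem_filter, mem_univ, true_and]
    field_simp
    ring
  · simp only [mem_filter, mem_univ, true_and] at hx
    ext
    · field_simp
      linear_combination -hx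
    · rfl

theorem card_filter_linear_eq_s10 {a b : F} (hab : a ≠ 0 ∨ b ≠ 0) (c : F) :
    #{x : F × F | a * x.1 + b * x.2 = c} = Fintype.card F := by
  rcases hab with ha | hb
  · exact card_filter_linear_eq_of_left_ne_zero ha b c
  · rw [← card_filter_linear_eq_of_left_ne_zero hb a c]
    exact card_equiv (Equiv.prodComm F F) (by simp [add_comm])

end LinearEquation

namespace FiniteFieldCircle

variable {F : Type*} [Field F]

abbrev OnCircle (p : F × F) (t : F × F × F) : Prop :=
  (p.1 - t.1) ^ 2 + (p.2 - t.2.1) ^ 2 = t.2.2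

/-- Subtracting the two circle equations leaves the perpendicular bisector of `p` and `p'`. -/
theorem onCircle_and_onCircle_iff (p p' : F × F) (t : F × F × F) :
    OnCircle p t ∧ OnCircle p' t ↔ OnCircle p t ∧
      2 * (p'.1 - p.1) * t.1 + 2 * (p'.2 - p.2) * t.2.1 =
        p'.1 ^ 2 + p'.2 ^ 2 - p.1 ^ 2 - p.2 ^ 2 := by
  refine and_congr_right fun h => ⟨fun h' => ?_, fun h' => ?_⟩
  · linear_combination h - h'
  · linear_combination h - h'

variable [Fintype F] [DecidableEq F]

theorem card_filter_onCircle_and_center (p : F × F) (Q : F × F → Prop) [DecidablePred Q] :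
    #{t : F × F × F | OnCircle p t ∧ Q (t.1, t.2.1)} = #{c : F × F | Q c} :=
  card_bij' (fun t _ => (t.1, t.2.1)) (fun c _ => (c.1, c.2, (p.1 - c.1) ^ 2 + (p.2 - c.2) ^ 2))
    (fun _ ht => by simp_all) (fun _ hc => by simp_all) (fun _ ht => by simp_all) (fun _ _ => rfl)

theorem card_filter_onCircle (p : F × F) :
    #{t : F × F × F | OnCircle p t} = Fintype.card F ^ 2 := by
  simpa [sq] using card_filter_onCircle_and_center p (fun _ => True)

theorem card_filter_onCircle_and_onCircle (hchar : ringChar F ≠ 2) {p p' : F × F}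
    (hne : p ≠ p') :
    #{t : F × F × F | OnCircle p t ∧ OnCircle p' t} = Fintype.card F := by
  have h2 : (2 : F) ≠ 0 := Ring.two_ne_zero hchar
  have hline : 2 * (p'.1 - p.1) ≠ 0 ∨ 2 * (p'.2 - p.2) ≠ 0 := by
    by_contra! h
    simp only [mul_eq_zero, h2, false_or, sub_eq_zero] at h
    exact hne (Prod.ext h.1.symm h.2.symm)
  simp_rw [onCircle_and_onCircle_iff p p']
  rw [card_filter_onCircle_and_center p
    (fun c => 2 * (p'.1 - p.1) * c.1 + 2 * (p'.2 - p.2) * c.2 = _)]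
  exact card_filter_linear_eq_s10 hline _

abbrev pointsOn (P : Finset (F × F)) (t : F × F × F) : Finset (F × F) := {p ∈ P | OnCircle p t}

theorem sum_card_pointsOn (P : Finset (F × F)) :
    ∑ t, #(pointsOn P t) = #P * Fintype.card F ^ 2 := by
  trans ∑ p ∈ P, #(univ.bipartiteAbove OnCircle p)
  · exact (sum_card_bipartiteAbove_eq_sum_card_bipartiteBelow _).symm
  · simp [bipartiteAbove, card_filter_onCircle]

theorem sum_card_pointsOn_sq (hchar : ringChar F ≠ 2) (P : Finset (F × F)) :
    ∑ t, #(pointsOn P t) ^ 2 =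
      #P * Fintype.card F ^ 2 + #P * (#P - 1) * Fintype.card F := by
  have hpairs (t : F × F × F) : #(pointsOn P t) ^ 2 =
      #{pp ∈ P ×ˢ P | OnCircle pp.1 t ∧ OnCircle pp.2 t} := by
    rw [sq, ← card_product, ← filter_product]
  have hrow (p : F × F) (hp : p ∈ P) :
      ∑ p' ∈ P, #{t : F × F × F | OnCircle p t ∧ OnCircle p' t} =
        Fintype.card F ^ 2 + (#P - 1) * Fintype.card F := by
    rw [← add_sum_erase P _ hp]
    simp only [and_self]
    rw [card_filter_onCircle,
      sum_congr rfl fun p' hp' => card_filter_onCircle_and_onCircle hchar (ne_of_mem_erase hp').symm,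
      sum_const, card_erase_of_mem hp, smul_eq_mul]
  simp_rw [hpairs]
  trans ∑ pp ∈ P ×ˢ P, #(univ.bipartiteAbove (fun pp t => OnCircle pp.1 t ∧ OnCircle pp.2 t) pp)
  · exact (sum_card_bipartiteAbove_eq_sum_card_bipartiteBelow _).symm
  simp only [bipartiteAbove, sum_product]
  rw [sum_congr rfl hrow, sum_const, smul_eq_mul]
  ring

end FiniteFieldCircle

open FiniteFieldCircle in
theorem few_poor_circles {F : Type*} [Field F] [Fintype F] [DecidableEq F]
    {q : ℕ} (hq : Fintype.card F = q) (hchar : ringChar F ≠ 2)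
    (P : Finset (F × F)) (hP : P.card = 5 * q) :
    ((Finset.univ.filter (fun t : F × F × F =>
        (P.filter (fun p => (p.1 - t.1) ^ 2 + (p.2 - t.2.1) ^ 2 = t.2.2)).card ≤ 2)).card : ℝ) <
      5 * (q : ℝ) ^ 3 / 9 := by
  have hq1 : 1 ≤ q := hq ▸ Fintype.card_pos
  set n : F × F × F → ℝ := fun t => #(pointsOn P t)
  have hsum : ∑ t, n t = 5 * q ^ 3 := by
    simp only [n, ← Nat.cast_sum, sum_card_pointsOn, hP, hq]
    push_cast
    ring
  have hsum_sq : ∑ t, n t ^ 2 = 30 * q ^ 3 - 5 * q ^ 2 := by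
    simp only [n, ← Nat.cast_pow, ← Nat.cast_sum, sum_card_pointsOn_sq hchar, hP, hq]
    push_cast [Nat.cast_sub (by omega : 1 ≤ 5 * q)]
    ring
  have hvar : ∑ t, (n t - 5) ^ 2 = 5 * (q : ℝ) ^ 3 - 5 * q ^ 2 := by
    simp only [sub_sq, sum_add_distrib, sum_sub_distrib, ← sum_mul, ← mul_sum, hsum, hsum_sq,
      sum_const, card_univ, Fintype.card_prod, hq]
    ring
  have hpoor := card_filter_le_sub_mul_sq_le_sum_sq univ n (μ := 5) (δ := 3) (by norm_num)
  have hfilter : #{t : F × F × F | n t ≤ 5 - 3} =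
      #{t : F × F × F | #(pointsOn P t) ≤ 2} := by
    congr 1
    exact filter_congr fun t _ => by norm_num [n]
  rw [hfilter, hvar] at hpoor
  have : (1 : ℝ) ≤ q := by exact_mod_cast hq1
  nlinarith
end
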